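/- arXiv:2203.03104 — 3 statements merged into one kernel-verified Lean document; each statement's English description precedes it below -/
import Mathlib

section
/- Let π be a probability measure and P a Markov kernel, reversible with respect to π, with spectral gap κ ∈ (0,1), meaning ‖Pf − πf‖²_{L²(π)} ≤ (1−κ) Var_π(f) for all f ∈ L²(π). Let P̂ be a Markov kernel with ‖(P − P̂)f‖_{L²(π)} ≤ ε ‖f‖_{L²(π)} for all f ∈ L²(π). Then for every a ∈ (0,1) and every f ∈ L²(π), Var_π(P̂ f) ≤ (1 − (1−a)κ + (2 + 2/(aκ)) ε²) Var_π(f). -/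
/-!
Writing `P̂f - πf = (Pf - πf) - (Pf - P̂f)` and using `(u - v)² ≤ (1 + aκ) u² + (1 + 1/(aκ)) v²`,
`Var_π(P̂f) ≤ ∫ (P̂f - πf)² dπ ≤ (1 + aκ)(1 - κ) Var_π f + (1 + 1/(aκ)) ε² Var_π f`, where the
perturbation bound is applied to `f - πf`; finally `(1 + aκ)(1 - κ) ≤ 1 - (1 - a)κ`.

Kernel integrals of non-integrable functions are junk zeros, so one first needs `Pf` and `P̂f` to be
genuine elements of `L²(π)`. On bounded measurable functions, where nothing is junk, the two
hypotheses bound `P` and `P̂` on `L²(π)`. Monotone convergence along the truncations `min |f| n`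
extends this to measurable `f`, and the bound on indicators of `π`-null sets shows that `P x` and
`P̂ x` do not see the choice of representative of `f`, for `π`-a.e. `x`.
-/

open MeasureTheory ProbabilityTheory Filter
open scoped ENNReal

lemma sub_sq_le_one_add_mul_sq_add (u v : ℝ) {t : ℝ} (ht : 0 < t) :
    (u - v) ^ 2 ≤ (1 + t) * u ^ 2 + (1 + 1 / t) * v ^ 2 := by
  have key : (1 + t) * u ^ 2 + (1 + 1 / t) * v ^ 2 - (u - v) ^ 2 = (t * u + v) ^ 2 / t := by
    field_simp; ring
  have : 0 ≤ (t * u + v) ^ 2 / t := by positivity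
  linarith

section
variable {α : Type*} [MeasurableSpace α] {μ : Measure α}

lemma integral_sub_sq_le {u v : α → ℝ} (hu : MemLp u 2 μ) (hv : MemLp v 2 μ) {t : ℝ}
    (ht : 0 < t) :
    ∫ x, (u x - v x) ^ 2 ∂μ ≤ (1 + t) * ∫ x, u x ^ 2 ∂μ + (1 + 1 / t) * ∫ x, v x ^ 2 ∂μ := by
  have hu2 := hu.integrable_sq.const_mul (1 + t)
  have hv2 := hv.integrable_sq.const_mul (1 + 1 / t)
  rw [← integral_const_mul, ← integral_const_mul, ← integral_add hu2 hv2]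
  exact integral_mono (hu.sub hv).integrable_sq (hu2.add hv2)
    fun x => sub_sq_le_one_add_mul_sq_add _ _ ht

variable [IsProbabilityMeasure μ]

lemma integral_sq_eq_integral_sub_sq_add {g : α → ℝ} (hg : MemLp g 2 μ) :
    ∫ x, g x ^ 2 ∂μ = ∫ x, (g x - ∫ y, g y ∂μ) ^ 2 ∂μ + (∫ y, g y ∂μ) ^ 2 := by
  have h := variance_eq_sub hg
  rw [variance_eq_integral hg.aemeasurable] at h
  simp only [Pi.pow_apply] at h
  linarith

lemma integral_sub_integral_sq_le {g : α → ℝ} (hg : MemLp g 2 μ) (c : ℝ) :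
    ∫ x, (g x - ∫ y, g y ∂μ) ^ 2 ∂μ ≤ ∫ x, (g x - c) ^ 2 ∂μ := by
  have h := integral_sq_eq_integral_sub_sq_add (g := fun x => g x - c) (hg.sub (memLp_const c))
  have hc : ∫ y, (g y - c) ∂μ = ∫ y, g y ∂μ - c := by
    simp [integral_sub (hg.integrable one_le_two) (integrable_const c)]
  simp only [hc, sub_sub_sub_cancel_right] at h
  nlinarith [sq_nonneg (∫ y, g y ∂μ - c)]

end

namespace ProbabilityTheory.Kernel

variable {α β : Type*} [MeasurableSpace α] [MeasurableSpace β]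
  {K : Kernel α β} {μ : Measure α} {ν : Measure β} {C : ℝ}

/-- Restricting to bounded measurable `g` keeps every kernel integral free of junk values. -/
def IsL2BoundedOnBounded (K : Kernel α β) (μ : Measure α) (ν : Measure β) (C : ℝ) : Prop :=
  ∀ g : β → ℝ, Measurable g → (∃ c, ∀ y, ‖g y‖ ≤ c) →
    ∫ x, (∫ y, g y ∂K x) ^ 2 ∂μ ≤ C * ∫ y, g y ^ 2 ∂ν

lemma memLp_integral_of_norm_le [IsMarkovKernel K] [IsFiniteMeasure μ] {g : β → ℝ}
    (hg : Measurable g) {c : ℝ} (hc : ∀ y, ‖g y‖ ≤ c) (p : ℝ≥0∞) :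
    MemLp (fun x => ∫ y, g y ∂K x) p μ :=
  .of_bound hg.stronglyMeasurable.integral_kernel.aestronglyMeasurable c <| .of_forall fun x => by
    simpa using norm_integral_le_of_norm_le_const (μ := K x) (.of_forall hc)

lemma lintegral_sq_lintegral_enorm_le_of_min {f : β → ℝ} (hf : Measurable f) {B : ℝ≥0∞}
    (h : ∀ n : ℕ, ∫⁻ x, (∫⁻ y, min ‖f y‖ₑ n ∂K x) ^ 2 ∂μ ≤ B) :
    ∫⁻ x, (∫⁻ y, ‖f y‖ₑ ∂K x) ^ 2 ∂μ ≤ B := by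
  have hmeas (n : ℕ) : Measurable fun y => min ‖f y‖ₑ n := hf.enorm.min measurable_const
  have hmono : Monotone fun (n : ℕ) (y : β) => min ‖f y‖ₑ n :=
    fun m n hmn y => min_le_min_left _ (by exact_mod_cast hmn)
  have hsup (x : α) : ∫⁻ y, ‖f y‖ₑ ∂K x = ⨆ n : ℕ, ∫⁻ y, min ‖f y‖ₑ n ∂K x := by
    rw [← lintegral_iSup hmeas hmono]
    congr with y
    rw [← inf_iSup_eq, ENNReal.iSup_natCast]
    exact (min_top_right _).symm
  calc ∫⁻ x, (∫⁻ y, ‖f y‖ₑ ∂K x) ^ 2 ∂μ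
      = ∫⁻ x, ⨆ n : ℕ, (∫⁻ y, min ‖f y‖ₑ n ∂K x) ^ 2 ∂μ := by
        simp_rw [hsup, ENNReal.iSup_pow]
    _ = ⨆ n : ℕ, ∫⁻ x, (∫⁻ y, min ‖f y‖ₑ n ∂K x) ^ 2 ∂μ :=
        lintegral_iSup (fun n => ((hmeas n).lintegral_kernel).pow_const 2)
          fun m n hmn x => pow_le_pow_left' (lintegral_mono (hmono hmn)) 2
    _ ≤ B := iSup_le h

namespace IsL2BoundedOnBounded

variable [IsMarkovKernel K] [IsFiniteMeasure μ]

lemma comp_absolutelyContinuous (hK : K.IsL2BoundedOnBounded μ ν C) : K ∘ₘ μ ≪ ν := by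
  refine Measure.AbsolutelyContinuous.mk fun N hN hνN => ?_
  set g : β → ℝ := N.indicator 1
  have hg : Measurable g := measurable_one.indicator hN
  have hg1 (y : β) : ‖g y‖ ≤ 1 := by
    by_cases hy : y ∈ N <;> simp [g, hy]
  have hg0 : ∫ y, g y ^ 2 ∂ν = 0 := integral_eq_zero_of_ae <| by
    filter_upwards [measure_eq_zero_iff_ae_notMem.1 hνN] with y hy
    simp [g, hy]
  have hKg : ∫ x, (∫ y, g y ∂K x) ^ 2 ∂μ = 0 :=
    le_antisymm (by simpa [hg0] using hK g hg ⟨1, hg1⟩) (integral_nonneg fun x => sq_nonneg _)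
  rw [integral_eq_zero_iff_of_nonneg (fun x => sq_nonneg _)
    (memLp_integral_of_norm_le hg hg1 2).integrable_sq] at hKg
  rw [Measure.bind_apply hN K.aemeasurable]
  refine lintegral_eq_zero_of_ae_eq_zero ?_
  filter_upwards [hKg] with x hx
  simpa [g, integral_indicator_one hN, measureReal_eq_zero_iff] using hx

variable [IsFiniteMeasure ν]

lemma lintegral_sq_lintegral_min_enorm_le (hK : K.IsL2BoundedOnBounded μ ν C) {f : β → ℝ}
    (hf : Measurable f) (hf2 : MemLp f 2 ν) (n : ℕ) :
    ∫⁻ x, (∫⁻ y, min ‖f y‖ₑ n ∂K x) ^ 2 ∂μ ≤ ENNReal.ofReal (|C| * ∫ y, f y ^ 2 ∂ν) := by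
  set g : β → ℝ := fun y => min |f y| n
  have hg : Measurable g := hf.abs.min measurable_const
  have hg0 (y : β) : 0 ≤ g y := le_min (abs_nonneg _) n.cast_nonneg
  have hgn (y : β) : ‖g y‖ ≤ n := by
    rw [Real.norm_of_nonneg (hg0 y)]; exact min_le_right _ _
  have hKg : MemLp (fun x => ∫ y, g y ∂K x) 2 μ := memLp_integral_of_norm_le hg hgn 2
  have hlin (x : α) : ∫⁻ y, min ‖f y‖ₑ n ∂K x = ENNReal.ofReal (∫ y, g y ∂K x) := by
    rw [ofReal_integral_eq_lintegral_ofReal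
      (.of_bound hg.aestronglyMeasurable n (.of_forall hgn)) (.of_forall hg0)]
    simp [g, Real.enorm_eq_ofReal_abs]
  have hg2 : ∫ y, g y ^ 2 ∂ν ≤ ∫ y, f y ^ 2 ∂ν :=
    integral_mono ((MemLp.of_bound hg.aestronglyMeasurable n (.of_forall hgn)).integrable_sq)
      hf2.integrable_sq fun y => by
        simpa [sq_abs] using pow_le_pow_left₀ (hg0 y) (min_le_left |f y| n) 2
  calc ∫⁻ x, (∫⁻ y, min ‖f y‖ₑ n ∂K x) ^ 2 ∂μ
      = ∫⁻ x, ENNReal.ofReal ((∫ y, g y ∂K x) ^ 2) ∂μ := by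
        simp_rw [hlin, ENNReal.ofReal_pow (integral_nonneg hg0)]
    _ = ENNReal.ofReal (∫ x, (∫ y, g y ∂K x) ^ 2 ∂μ) :=
        (ofReal_integral_eq_lintegral_ofReal hKg.integrable_sq
          (.of_forall fun x => sq_nonneg _)).symm
    _ ≤ ENNReal.ofReal (|C| * ∫ y, f y ^ 2 ∂ν) := by
        refine ENNReal.ofReal_le_ofReal ((hK g hg ⟨n, hgn⟩).trans ?_)
        exact mul_le_mul (le_abs_self C) hg2 (integral_nonneg fun y => sq_nonneg _) (abs_nonneg C)

lemma ae_integrable_and_memLp_of_measurable (hK : K.IsL2BoundedOnBounded μ ν C) {f : β → ℝ}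
    (hf : Measurable f) (hf2 : MemLp f 2 ν) :
    (∀ᵐ x ∂μ, Integrable f (K x)) ∧ MemLp (fun x => ∫ y, f y ∂K x) 2 μ := by
  have hF : ∫⁻ x, (∫⁻ y, ‖f y‖ₑ ∂K x) ^ 2 ∂μ < ∞ :=
    (lintegral_sq_lintegral_enorm_le_of_min hf
      (hK.lintegral_sq_lintegral_min_enorm_le hf hf2)).trans_lt ENNReal.ofReal_lt_top
  refine ⟨?_, ?_⟩
  · filter_upwards [ae_lt_top (hf.enorm.lintegral_kernel.pow_const 2) hF.ne] with x hx
    exact ⟨hf.aestronglyMeasurable, hasFiniteIntegral_iff_enorm.2 (by simpa using hx)⟩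
  · rw [memLp_two_iff_integrable_sq hf.stronglyMeasurable.integral_kernel.aestronglyMeasurable]
    refine ⟨(hf.stronglyMeasurable.integral_kernel.pow 2).aestronglyMeasurable, ?_⟩
    refine lt_of_le_of_lt (lintegral_mono fun x => ?_) hF
    simp only [enorm_pow]
    exact pow_le_pow_left' (enorm_integral_le_lintegral_enorm _) 2

lemma ae_integrable_and_memLp (hK : K.IsL2BoundedOnBounded μ ν C) {f : β → ℝ}
    (hf : MemLp f 2 ν) :
    (∀ᵐ x ∂μ, Integrable f (K x)) ∧ MemLp (fun x => ∫ y, f y ∂K x) 2 μ := by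
  have hae : ∀ᵐ x ∂μ, f =ᵐ[K x] hf.1.mk f :=
    Measure.ae_ae_of_ae_comp (hK.comp_absolutelyContinuous.ae_le hf.1.ae_eq_mk)
  obtain ⟨hint, hmem⟩ := hK.ae_integrable_and_memLp_of_measurable
    hf.1.stronglyMeasurable_mk.measurable (hf.ae_eq hf.1.ae_eq_mk)
  refine ⟨?_, hmem.ae_eq ?_⟩
  · filter_upwards [hae, hint] with x hx hi
    exact hi.congr hx.symm
  · filter_upwards [hae] with x hx
    exact integral_congr_ae hx.symm

end IsL2BoundedOnBounded

lemma isL2BoundedOnBounded_of_spectralGap {Ω : Type*} [MeasurableSpace Ω] {π : Measure Ω}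
    [IsProbabilityMeasure π] {P : Kernel Ω Ω} [IsMarkovKernel P] {κ : ℝ} (hκ : 0 ≤ κ)
    (hgap : ∀ f : Ω → ℝ, MemLp f 2 π →
      ∫ x, ((∫ y, f y ∂(P x)) - ∫ y, f y ∂π) ^ 2 ∂π
        ≤ (1 - κ) * ∫ x, (f x - ∫ y, f y ∂π) ^ 2 ∂π) :
    P.IsL2BoundedOnBounded π π 2 := by
  rintro g hg ⟨c, hc⟩
  have hg2 : MemLp g 2 π := .of_bound hg.aestronglyMeasurable c (.of_forall hc)
  have hPg := memLp_integral_of_norm_le (K := P) (μ := π) hg hc 2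
  have hgap_g := hgap g hg2
  set m := ∫ y, g y ∂π
  have hvar : 0 ≤ ∫ x, (g x - m) ^ 2 ∂π := integral_nonneg fun x => sq_nonneg _
  calc ∫ x, (∫ y, g y ∂P x) ^ 2 ∂π
      = ∫ x, ((∫ y, g y ∂P x) - m - (-m)) ^ 2 ∂π := by simp
    _ ≤ (1 + 1) * ∫ x, ((∫ y, g y ∂P x) - m) ^ 2 ∂π + (1 + 1 / 1) * ∫ x, (-m) ^ 2 ∂π :=
        integral_sub_sq_le (hPg.sub (memLp_const m)) (memLp_const (-m)) one_pos
    _ ≤ 2 * ∫ x, (g x - m) ^ 2 ∂π + 2 * m ^ 2 := by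
        simp only [MeasureTheory.integral_const, probReal_univ, smul_eq_mul, one_mul, neg_sq]
        nlinarith
    _ = 2 * ∫ x, g x ^ 2 ∂π := by rw [integral_sq_eq_integral_sub_sq_add hg2]; ring

lemma IsL2BoundedOnBounded.of_perturbation {P Phat : Kernel α β} [IsMarkovKernel P]
    [IsMarkovKernel Phat] [IsFiniteMeasure μ] [IsFiniteMeasure ν]
    (hP : P.IsL2BoundedOnBounded μ ν C) {ε : ℝ}
    (hpert : ∀ f : β → ℝ, MemLp f 2 ν →
      ∫ x, ((∫ y, f y ∂(P x)) - ∫ y, f y ∂(Phat x)) ^ 2 ∂μ ≤ ε ^ 2 * ∫ y, f y ^ 2 ∂ν) :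
    Phat.IsL2BoundedOnBounded μ ν (2 * C + 2 * ε ^ 2) := by
  rintro g hg ⟨c, hc⟩
  have hPg := memLp_integral_of_norm_le (K := P) (μ := μ) hg hc 2
  have hQg := memLp_integral_of_norm_le (K := Phat) (μ := μ) hg hc 2
  calc ∫ x, (∫ y, g y ∂Phat x) ^ 2 ∂μ
      = ∫ x, ((∫ y, g y ∂P x) - ((∫ y, g y ∂P x) - ∫ y, g y ∂Phat x)) ^ 2 ∂μ := by simp
    _ ≤ (1 + 1) * ∫ x, (∫ y, g y ∂P x) ^ 2 ∂μ
          + (1 + 1 / 1) * ∫ x, ((∫ y, g y ∂P x) - ∫ y, g y ∂Phat x) ^ 2 ∂μ :=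
        integral_sub_sq_le hPg (hPg.sub hQg) one_pos
    _ ≤ 2 * (C * ∫ y, g y ^ 2 ∂ν) + 2 * (ε ^ 2 * ∫ y, g y ^ 2 ∂ν) := by
        have h1 := hP g hg ⟨c, hc⟩
        have h2 := hpert g (.of_bound hg.aestronglyMeasurable c (.of_forall hc))
        linarith
    _ = (2 * C + 2 * ε ^ 2) * ∫ y, g y ^ 2 ∂ν := by ring

end ProbabilityTheory.Kernel

theorem var_perturbed_kernel_le_general {Ω : Type*} [MeasurableSpace Ω]
    (π : Measure Ω) [IsProbabilityMeasure π]
    (P Phat : Kernel Ω Ω) [IsMarkovKernel P] [IsMarkovKernel Phat]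
    (κ ε : ℝ) (hκ : κ ∈ Set.Ioo (0 : ℝ) 1)
    (hgap : ∀ f : Ω → ℝ, MemLp f 2 π →
      ∫ x, ((∫ y, f y ∂(P x)) - ∫ y, f y ∂π) ^ 2 ∂π
        ≤ (1 - κ) * ∫ x, (f x - ∫ y, f y ∂π) ^ 2 ∂π)
    (hpert : ∀ f : Ω → ℝ, MemLp f 2 π →
      ∫ x, ((∫ y, f y ∂(P x)) - ∫ y, f y ∂(Phat x)) ^ 2 ∂π ≤ ε ^ 2 * ∫ x, (f x) ^ 2 ∂π)
    (a : ℝ) (ha : a ∈ Set.Ioo (0 : ℝ) 1) (f : Ω → ℝ) (hf : MemLp f 2 π) :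
    ∫ x, ((∫ y, f y ∂(Phat x)) - ∫ x', (∫ y, f y ∂(Phat x')) ∂π) ^ 2 ∂π
      ≤ (1 - (1 - a) * κ + (2 + 2 / (a * κ)) * ε ^ 2) *
          ∫ x, (f x - ∫ y, f y ∂π) ^ 2 ∂π := by
  have hP := Kernel.isL2BoundedOnBounded_of_spectralGap hκ.1.le hgap
  obtain ⟨hPint, hPf⟩ := hP.ae_integrable_and_memLp hf
  obtain ⟨hQint, hQf⟩ := (hP.of_perturbation hpert).ae_integrable_and_memLp hf
  set m := ∫ y, f y ∂π
  set V := ∫ x, (f x - m) ^ 2 ∂π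
  have hdist : ∫ x, ((∫ y, f y ∂(P x)) - ∫ y, f y ∂(Phat x)) ^ 2 ∂π ≤ ε ^ 2 * V := by
    refine le_of_eq_of_le (integral_congr_ae ?_) (hpert _ (hf.sub (memLp_const m)))
    filter_upwards [hPint, hQint] with x hPx hQx
    simp [integral_sub hPx (integrable_const m), integral_sub hQx (integrable_const m)]
  have hat : 0 < a * κ := mul_pos ha.1 hκ.1
  calc _ ≤ ∫ x, ((∫ y, f y ∂(Phat x)) - m) ^ 2 ∂π := integral_sub_integral_sq_le hQf m
    _ = ∫ x, ((∫ y, f y ∂(P x)) - m - ((∫ y, f y ∂(P x)) - ∫ y, f y ∂(Phat x))) ^ 2 ∂π := by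
        simp
    _ ≤ (1 + a * κ) * ∫ x, ((∫ y, f y ∂(P x)) - m) ^ 2 ∂π
          + (1 + 1 / (a * κ)) * ∫ x, ((∫ y, f y ∂(P x)) - ∫ y, f y ∂(Phat x)) ^ 2 ∂π :=
        integral_sub_sq_le (hPf.sub (memLp_const m)) (hPf.sub hQf) hat
    _ ≤ (1 + a * κ) * ((1 - κ) * V) + (1 + 1 / (a * κ)) * (ε ^ 2 * V) := by
        gcongr
        exact hgap f hf
    _ ≤ _ := by
        have hslack : 0 ≤ a * κ ^ 2 * V + (1 + 1 / (a * κ)) * ε ^ 2 * V := by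
          have := ha.1
          positivity
        linear_combination hslack

/-- Spectral-gap perturbation: if `P` has spectral gap `κ` w.r.t. `π` and `P̂` is `ε`-close
to `P` in `L²(π)` operator norm, then `Var_π(P̂f) ≤ (1 − (1−a)κ + (2 + 2/(aκ))ε²) Var_π f`. -/
theorem var_perturbed_kernel_le {Ω : Type*} [MeasurableSpace Ω]
    (π : Measure Ω) [IsProbabilityMeasure π]
    (P Phat : Kernel Ω Ω) [IsMarkovKernel P] [IsMarkovKernel Phat]
    (κ ε : ℝ) (hκ : κ ∈ Set.Ioo (0 : ℝ) 1) (hε : 0 ≤ ε)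
    (hgap : ∀ f : Ω → ℝ, MemLp f 2 π →
      ∫ x, ((∫ y, f y ∂(P x)) - ∫ y, f y ∂π) ^ 2 ∂π
        ≤ (1 - κ) * ∫ x, (f x - ∫ y, f y ∂π) ^ 2 ∂π)
    (hpert : ∀ f : Ω → ℝ, MemLp f 2 π →
      ∫ x, ((∫ y, f y ∂(P x)) - ∫ y, f y ∂(Phat x)) ^ 2 ∂π ≤ ε ^ 2 * ∫ x, (f x) ^ 2 ∂π)
    (a : ℝ) (ha : a ∈ Set.Ioo (0 : ℝ) 1) (f : Ω → ℝ) (hf : MemLp f 2 π) :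
    ∫ x, ((∫ y, f y ∂(Phat x)) - ∫ x', (∫ y, f y ∂(Phat x')) ∂π) ^ 2 ∂π
      ≤ (1 - (1 - a) * κ + (2 + 2 / (a * κ)) * ε ^ 2) *
          ∫ x, (f x - ∫ y, f y ∂π) ^ 2 ∂π :=
  var_perturbed_kernel_le_general π P Phat κ ε hκ hgap hpert a ha f hf
end

section
/- Let (X_k) be a stationary Markov chain with initial distribution π̂ and kernel P̂, and let f be a measurable function with π̂ f = 0. Suppose there exist constants ρ̂ ∈ (0,1) and a nonnegative function g such that for every k ≥ 0 and every x, |E[f(X_k) | X_0 = x]| ≤ ρ̂^k g(x). Then the Monte Carlo estimator f̂_M = (1/M) ∑_{k=1}^M f(X_k) satisfies E[f̂_M²] ≤ (2 / ((1−ρ̂) M)) · E_{π̂}[|f(X_0)| g(X_0)]. -/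
open MeasureTheory ProbabilityTheory

/-!
By the decay hypothesis, each cross moment `∫ f · P̂^{|j-k|} f dπ̂` is at most
`ρ̂^{|j-k|} E_{π̂}[|f| g]`. For a fixed `j`, the distances `|j - k|` take each value at most
twice, so the inner sum over `k` is at most twice the geometric series `1/(1-ρ̂)`.
-/

section GeometricSums

variable {ρ : ℝ}

lemma sum_pow_le_inv_one_sub (hρ₀ : 0 ≤ ρ) (hρ₁ : ρ < 1) (t : Finset ℕ) :
    ∑ i ∈ t, ρ ^ i ≤ (1 - ρ)⁻¹ :=
  tsum_geometric_of_lt_one hρ₀ hρ₁ ▸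
    (summable_geometric_of_lt_one hρ₀ hρ₁).sum_le_tsum t fun i _ => pow_nonneg hρ₀ i

lemma sum_pow_max_sub_min_le (hρ₀ : 0 ≤ ρ) (hρ₁ : ρ < 1) (s : Finset ℕ) (j : ℕ) :
    ∑ k ∈ s, ρ ^ (max j k - min j k) ≤ 2 * (1 - ρ)⁻¹ := by
  rw [← Finset.sum_filter_add_sum_filter_not s (· ≤ j), two_mul]
  have below : ∑ k ∈ s with k ≤ j, ρ ^ (max j k - min j k)
      = ∑ i ∈ (s.filter (· ≤ j)).image (j - ·), ρ ^ i := by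
    rw [Finset.sum_image fun a ha b hb hab => by
      simp only [Finset.mem_coe, Finset.mem_filter] at ha hb; omega]
    refine Finset.sum_congr rfl fun k hk => congrArg (ρ ^ ·) ?_
    have := (Finset.mem_filter.mp hk).2
    omega
  have above : ∑ k ∈ s with ¬k ≤ j, ρ ^ (max j k - min j k)
      = ∑ i ∈ (s.filter (¬· ≤ j)).image (· - j), ρ ^ i := by
    rw [Finset.sum_image fun a ha b hb hab => by
      simp only [Finset.mem_coe, Finset.mem_filter] at ha hb; omega]
    refine Finset.sum_congr rfl fun k hk => congrArg (ρ ^ ·) ?_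
    have := (Finset.mem_filter.mp hk).2
    omega
  rw [below, above]
  exact add_le_add (sum_pow_le_inv_one_sub hρ₀ hρ₁ _) (sum_pow_le_inv_one_sub hρ₀ hρ₁ _)

lemma sum_sum_pow_max_sub_min_le (hρ₀ : 0 ≤ ρ) (hρ₁ : ρ < 1) (s : Finset ℕ) :
    ∑ j ∈ s, ∑ k ∈ s, ρ ^ (max j k - min j k) ≤ s.card * (2 * (1 - ρ)⁻¹) := by
  simpa using Finset.sum_le_sum fun j (_ : j ∈ s) => sum_pow_max_sub_min_le hρ₀ hρ₁ s j

end GeometricSums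

lemma integral_mul_le_of_abs_le_mul {Ω : Type*} [MeasurableSpace Ω] {μ : Measure Ω}
    {u v g : Ω → ℝ} {c : ℝ} (hint : Integrable (fun x => |u x| * g x) μ)
    (hv : ∀ x, |v x| ≤ c * g x) :
    ∫ x, u x * v x ∂μ ≤ c * ∫ x, |u x| * g x ∂μ := by
  rw [← integral_const_mul]
  calc ∫ x, u x * v x ∂μ ≤ ∫ x, |u x * v x| ∂μ := (le_abs_self _).trans abs_integral_le_integral_abs
    _ ≤ ∫ x, c * (|u x| * g x) ∂μ := by
      refine integral_mono_of_nonneg (.of_forall fun x => abs_nonneg _) (hint.const_mul c)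
        (.of_forall fun x => ?_)
      calc |u x * v x| = |u x| * |v x| := abs_mul _ _
        _ ≤ |u x| * (c * g x) := mul_le_mul_of_nonneg_left (hv x) (abs_nonneg _)
        _ = c * (|u x| * g x) := mul_left_comm _ _ _

theorem mc_variance_bound_general {Ω : Type*} [MeasurableSpace Ω]
    (πhat : Measure Ω)
    (Phat : Kernel Ω Ω)
    (f g : Ω → ℝ) (hg : ∀ x, 0 ≤ g x)
    (hint : Integrable (fun x => |f x| * g x) πhat)
    (ρ : ℝ) (hρ : ρ ∈ Set.Ioo (0 : ℝ) 1)
    (hdecay : ∀ (k : ℕ) (x : Ω),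
      |((fun (h : Ω → ℝ) (x : Ω) => ∫ y, h y ∂(Phat x))^[k] f) x| ≤ ρ ^ k * g x)
    (M : ℕ) :
    (1 / (M : ℝ) ^ 2) * ∑ j ∈ Finset.Icc 1 M, ∑ k ∈ Finset.Icc 1 M,
        ∫ x, f x * ((fun (h : Ω → ℝ) (x : Ω) =>
          ∫ y, h y ∂(Phat x))^[max j k - min j k] f) x ∂πhat
      ≤ (2 / ((1 - ρ) * M)) * ∫ x, |f x| * g x ∂πhat := by
  set C := ∫ x, |f x| * g x ∂πhat
  have hC : 0 ≤ C := integral_nonneg fun x => mul_nonneg (abs_nonneg _) (hg x)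
  have hsum : ∑ j ∈ Finset.Icc 1 M, ∑ k ∈ Finset.Icc 1 M,
      ∫ x, f x * ((fun (h : Ω → ℝ) (x : Ω) =>
        ∫ y, h y ∂(Phat x))^[max j k - min j k] f) x ∂πhat
      ≤ M * (2 * (1 - ρ)⁻¹) * C := calc
    _ ≤ ∑ j ∈ Finset.Icc 1 M, ∑ k ∈ Finset.Icc 1 M, ρ ^ (max j k - min j k) * C :=
      Finset.sum_le_sum fun j _ => Finset.sum_le_sum fun k _ =>
        integral_mul_le_of_abs_le_mul hint (hdecay _)
    _ = (∑ j ∈ Finset.Icc 1 M, ∑ k ∈ Finset.Icc 1 M, ρ ^ (max j k - min j k)) * C := by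
      simp only [Finset.sum_mul]
    _ ≤ M * (2 * (1 - ρ)⁻¹) * C := by
      gcongr
      simpa using sum_sum_pow_max_sub_min_le hρ.1.le hρ.2 (Finset.Icc 1 M)
  rcases eq_or_ne M 0 with rfl | hM
  · simp
  have h1ρ : 1 - ρ ≠ 0 := (sub_pos.mpr hρ.2).ne'
  calc _ ≤ 1 / (M : ℝ) ^ 2 * (M * (2 * (1 - ρ)⁻¹) * C) := by gcongr
    _ = _ := by field_simp

/-- Non-asymptotic variance bound for the Monte Carlo estimator of a stationary Markov
chain: the expectation `E[f(X_j) f(X_k)]` of the stationary chain equals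
`∫ f · P̂^{|k-j|} f dπ̂`, and under the geometric decay `|P̂^k f(x)| ≤ ρ̂^k g(x)` the
second moment of `f̂_M = (1/M)∑_{k=1}^M f(X_k)` is at most
`2/((1−ρ̂)M) · E_{π̂}[|f| g]`. -/
theorem mc_variance_bound {Ω : Type*} [MeasurableSpace Ω]
    (πhat : Measure Ω) [IsProbabilityMeasure πhat]
    (Phat : Kernel Ω Ω) [IsMarkovKernel Phat]
    (hstat : ∀ s : Set Ω, MeasurableSet s → ∫⁻ x, Phat x s ∂πhat = πhat s)
    (f g : Ω → ℝ) (hf : Measurable f) (hg : ∀ x, 0 ≤ g x)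
    (hint : Integrable (fun x => |f x| * g x) πhat)
    (hzero : ∫ x, f x ∂πhat = 0)
    (ρ : ℝ) (hρ : ρ ∈ Set.Ioo (0 : ℝ) 1)
    (hdecay : ∀ (k : ℕ) (x : Ω),
      |((fun (h : Ω → ℝ) (x : Ω) => ∫ y, h y ∂(Phat x))^[k] f) x| ≤ ρ ^ k * g x)
    (M : ℕ) (hM : 0 < M) :
    (1 / (M : ℝ) ^ 2) * ∑ j ∈ Finset.Icc 1 M, ∑ k ∈ Finset.Icc 1 M,
        ∫ x, f x * ((fun (h : Ω → ℝ) (x : Ω) =>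
          ∫ y, h y ∂(Phat x))^[max j k - min j k] f) x ∂πhat
      ≤ (2 / ((1 - ρ) * M)) * ∫ x, |f x| * g x ∂πhat :=
  mc_variance_bound_general πhat Phat f g hg hint ρ hρ hdecay M
end

section
/- Let ν be a probability measure on Ω and S : Ω → Ω a measurable involution-like map. Let Q be the Markov kernel Q(x, {S(x)}) = a(x), Q(x, {x}) = 1 − a(x) with a(x) ∈ [0,1], reversible with respect to ν, and Q̂ the kernel with acceptance function â satisfying (1 − Cε) a(x) ≤ â(x) ≤ (1 + Cε) a(x) for all x. Then for all f ∈ L²(ν), ‖(Q − Q̂)f‖_{L²(ν)} ≤ 2Cε ‖f‖_{L²(ν)}. -/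
/-!
Pointwise, `(Q - Q̂) f = (a - â) (f ∘ S - f)` and `|a - â| ≤ Cε a`, so since `a ≤ 1`,
`|(Q - Q̂) f|² ≤ 2 (Cε)² (a · |f ∘ S|² + |f|²)`. Testing reversibility against `g = 1` shows that
`ν` is invariant under `Q`, hence `∫ a · |f ∘ S|² ≤ ∫ Q |f|² = ∫ |f|²`, and the two terms together
give `‖(Q - Q̂) f‖² ≤ 4 (Cε)² ‖f‖²`. Neither `a` nor `f ∘ S` need be measurable, so the argument
is run with lower Lebesgue integrals, and `|f|²` is reached from bounded functions by monotone
convergence.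
-/

open MeasureTheory
open scoped ENNReal

theorem AEMeasurable.exists_measurable_ge_ae_eq {α : Type*} [MeasurableSpace α] {μ : Measure α}
    {f : α → ℝ≥0∞} (hf : AEMeasurable f μ) :
    ∃ g : α → ℝ≥0∞, Measurable g ∧ f ≤ g ∧ g =ᵐ[μ] f := by
  set N := toMeasurable μ {x | f x ≠ hf.mk f x}
  have hN : μ N = 0 := (measure_toMeasurable _).trans (ae_iff.mp hf.ae_eq_mk)
  refine ⟨hf.mk f + N.indicator ⊤, ?_, fun x => ?_, ?_⟩
  · exact hf.measurable_mk.add (measurable_const.indicator (measurableSet_toMeasurable _ _))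
  · by_cases hx : x ∈ N
    · simp [hx]
    · have : f x = hf.mk f x := not_not.mp fun h => hx (subset_toMeasurable _ _ h)
      simp [hx, this]
  · filter_upwards [hf.ae_eq_mk, measure_eq_zero_iff_ae_notMem.mp hN] with x hfx hx
    simp [hx, hfx]

theorem integrable_of_integral_add_one_ne {α : Type*} [MeasurableSpace α] {μ : Measure α}
    [IsFiniteMeasure μ] {X : α → ℝ} (h : ∫ x, (X x + 1) ∂μ ≠ ∫ x, X x ∂μ) : Integrable X μ := by
  by_contra hX
  exact h (by rw [integral_undef hX, integral_undef (integrable_add_const_iff.not.mpr hX)])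

theorem enorm_sq_eq_ofReal_sq (r : ℝ) : ‖r‖ₑ ^ 2 = ENNReal.ofReal (r ^ 2) := by
  rw [Real.enorm_eq_ofReal_abs, ← ENNReal.ofReal_pow (abs_nonneg r), sq_abs]

theorem eLpNorm_two_sq_eq_lintegral {α : Type*} [MeasurableSpace α] {μ : Measure α} (f : α → ℝ) :
    eLpNorm f 2 μ ^ 2 = ∫⁻ x, ‖f x‖ₑ ^ 2 ∂μ := by
  simpa using eLpNorm_nnreal_pow_eq_lintegral (f := f) (μ := μ) (p := 2) two_ne_zero

theorem eLpNorm_two_le_of_lintegral_le {α : Type*} [MeasurableSpace α] {μ : Measure α}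
    {u v : α → ℝ} {c : ℝ≥0∞} (h : ∫⁻ x, ‖u x‖ₑ ^ 2 ∂μ ≤ c ^ 2 * ∫⁻ x, ‖v x‖ₑ ^ 2 ∂μ) :
    eLpNorm u 2 μ ≤ c * eLpNorm v 2 μ := by
  rwa [← ENNReal.pow_le_pow_left_iff two_ne_zero, mul_pow, eLpNorm_two_sq_eq_lintegral,
    eLpNorm_two_sq_eq_lintegral]

theorem sq_mul_sub_le_of_abs_sub_le {a b δ u v : ℝ} (ha : a ∈ Set.Icc (0 : ℝ) 1)
    (hab : |a - b| ≤ δ * a) :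
    ((a - b) * (u - v)) ^ 2 ≤ 2 * δ ^ 2 * (a * u ^ 2 + v ^ 2) := by
  have hsq : (a - b) ^ 2 ≤ δ ^ 2 * a :=
    calc (a - b) ^ 2 = |a - b| ^ 2 := (sq_abs _).symm
      _ ≤ (δ * a) ^ 2 := pow_le_pow_left₀ (abs_nonneg _) hab 2
      _ = δ ^ 2 * (a * a) := by ring
      _ ≤ δ ^ 2 * a := by gcongr; exact mul_le_of_le_one_right ha.1 ha.2
  calc ((a - b) * (u - v)) ^ 2 = (a - b) ^ 2 * (u - v) ^ 2 := mul_pow _ _ _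
    _ ≤ δ ^ 2 * a * (2 * (u ^ 2 + v ^ 2)) := by
        gcongr
        · exact mul_nonneg (sq_nonneg _) ha.1
        · nlinarith [sq_nonneg (u + v)]
    _ = 2 * δ ^ 2 * (a * u ^ 2 + a * v ^ 2) := by ring
    _ ≤ 2 * δ ^ 2 * (a * u ^ 2 + v ^ 2) := by
        gcongr; exact mul_le_of_le_one_left (sq_nonneg v) ha.2

section SwapKernel

variable {Ω : Type*} {S : Ω → Ω} {a : Ω → ℝ}

def swapKernel (a : Ω → ℝ) (S : Ω → Ω) (f : Ω → ℝ) (x : Ω) : ℝ :=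
  (1 - a x) * f x + a x * f (S x)

theorem swapKernel_mono (ha : ∀ x, a x ∈ Set.Icc (0 : ℝ) 1) {f g : Ω → ℝ} (hfg : f ≤ g) :
    swapKernel a S f ≤ swapKernel a S g := fun x =>
  add_le_add (mul_le_mul_of_nonneg_left (hfg x) (sub_nonneg.mpr (ha x).2))
    (mul_le_mul_of_nonneg_left (hfg (S x)) (ha x).1)

theorem mul_comp_le_swapKernel (ha : ∀ x, a x ∈ Set.Icc (0 : ℝ) 1) {f : Ω → ℝ} (hf : 0 ≤ f)
    (x : Ω) : a x * f (S x) ≤ swapKernel a S f x :=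
  le_add_of_nonneg_left (mul_nonneg (sub_nonneg.mpr (ha x).2) (hf x))

variable [MeasurableSpace Ω]

def IsSwapStationary (ν : Measure Ω) (a : Ω → ℝ) (S : Ω → Ω) : Prop :=
  ∀ h : Ω → ℝ, Measurable h → (∃ M, ∀ x, |h x| ≤ M) → ∫ x, swapKernel a S h x ∂ν = ∫ x, h x ∂ν

variable {ν : Measure Ω} [IsProbabilityMeasure ν]

/-- `a` need not be measurable. Integrability is forced by `∫ (Q h + 1) = ∫ h + 1 ≠ ∫ Q h`,
which the junk value `0` of both integrals would violate. -/
theorem IsSwapStationary.integrable_swapKernel (hν : IsSwapStationary ν a S)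
    {h : Ω → ℝ} (hm : Measurable h) (hb : ∃ M, ∀ x, |h x| ≤ M) :
    Integrable (swapKernel a S h) ν := by
  obtain ⟨M, hM⟩ := hb
  refine integrable_of_integral_add_one_ne ?_
  have hadd : ∀ x, swapKernel a S h x + 1 = swapKernel a S (fun y => h y + 1) x := fun x => by
    simp only [swapKernel]; ring
  simp_rw [hadd]
  rw [hν _ (hm.add_const 1) ⟨M + 1, fun x => (abs_add_le _ _).trans (by simp [hM x])⟩,
    hν h hm ⟨M, hM⟩,
    integral_add (.of_bound hm.aestronglyMeasurable M (ae_of_all _ hM)) (integrable_const 1)]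
  simp

theorem IsSwapStationary.lintegral_ofReal_mul_comp_le (hν : IsSwapStationary ν a S)
    (ha : ∀ x, a x ∈ Set.Icc (0 : ℝ) 1) {h : Ω → ℝ≥0∞} (hh : Measurable h) :
    ∫⁻ x, ENNReal.ofReal (a x) * h (S x) ∂ν ≤ ∫⁻ x, h x ∂ν := by
  set t : ℕ → Ω → ℝ := fun n x => (min (h x) n).toReal
  have ht_meas (n : ℕ) : Measurable (t n) := (hh.min measurable_const).ennreal_toReal
  have ht_nonneg (n : ℕ) : 0 ≤ t n := fun _ => ENNReal.toReal_nonneg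
  have ht_bdd (n : ℕ) (x : Ω) : |t n x| ≤ n := by
    rw [abs_of_nonneg (ht_nonneg n x)]
    exact ENNReal.toReal_le_of_le_ofReal n.cast_nonneg (by simp)
  have ht_mono : Monotone t := fun m n hmn x =>
    ENNReal.toReal_mono (by simp) (min_le_min_left _ (by exact_mod_cast hmn))
  have hQt_int (n : ℕ) : Integrable (swapKernel a S (t n)) ν :=
    hν.integrable_swapKernel (ht_meas n) ⟨n, ht_bdd n⟩
  have hpt (x : Ω) :
      ENNReal.ofReal (a x) * h (S x) ≤ ⨆ n, ENNReal.ofReal (swapKernel a S (t n) x) := by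
    have hsup : ⨆ n : ℕ, min (h (S x)) n = h (S x) := by
      rw [← inf_iSup_eq, ENNReal.iSup_natCast, inf_top_eq]
    calc ENNReal.ofReal (a x) * h (S x)
        = ⨆ n : ℕ, ENNReal.ofReal (a x) * min (h (S x)) n := by rw [← ENNReal.mul_iSup, hsup]
      _ ≤ ⨆ n, ENNReal.ofReal (swapKernel a S (t n) x) := iSup_mono fun n => by
          rw [← ENNReal.ofReal_toReal (a := min (h (S x)) n) (by simp),
            ← ENNReal.ofReal_mul (ha x).1]
          exact ENNReal.ofReal_le_ofReal (mul_comp_le_swapKernel ha (ht_nonneg n) x)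
  have hint_eq (n : ℕ) :
      ∫⁻ x, ENNReal.ofReal (swapKernel a S (t n) x) ∂ν = ∫⁻ x, ENNReal.ofReal (t n x) ∂ν := by
    have hQt_nonneg : 0 ≤ swapKernel a S (t n) := (swapKernel_mono ha (ht_nonneg n)).trans' <|
      fun x => by simp [swapKernel]
    rw [← ofReal_integral_eq_lintegral_ofReal (hQt_int n) (ae_of_all _ hQt_nonneg),
      hν _ (ht_meas n) ⟨n, ht_bdd n⟩, ofReal_integral_eq_lintegral_ofReal
        (.of_bound (ht_meas n).aestronglyMeasurable n (ae_of_all _ (ht_bdd n)))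
        (ae_of_all _ (ht_nonneg n))]
  calc ∫⁻ x, ENNReal.ofReal (a x) * h (S x) ∂ν
      ≤ ∫⁻ x, ⨆ n, ENNReal.ofReal (swapKernel a S (t n) x) ∂ν := lintegral_mono hpt
    _ = ⨆ n, ∫⁻ x, ENNReal.ofReal (swapKernel a S (t n) x) ∂ν :=
        lintegral_iSup' (fun n => (hQt_int n).aemeasurable.ennreal_ofReal) <|
          ae_of_all _ fun x m n hmn =>
            ENNReal.ofReal_le_ofReal (swapKernel_mono ha (ht_mono hmn) x)
    _ = ⨆ n, ∫⁻ x, ENNReal.ofReal (t n x) ∂ν := by simp_rw [hint_eq]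
    _ ≤ ∫⁻ x, h x ∂ν :=
        iSup_le fun n => lintegral_mono fun x => ENNReal.ofReal_toReal_le.trans (min_le_left _ _)

theorem IsSwapStationary.lintegral_ofReal_mul_comp_le' (hν : IsSwapStationary ν a S)
    (ha : ∀ x, a x ∈ Set.Icc (0 : ℝ) 1) {h : Ω → ℝ≥0∞} (hh : AEMeasurable h ν) :
    ∫⁻ x, ENNReal.ofReal (a x) * h (S x) ∂ν ≤ ∫⁻ x, h x ∂ν := by
  -- Replacing `h` by an a.e. equal function could change `h ∘ S` on a non-null set,
  -- so `h` is dominated instead.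
  obtain ⟨g, hg, hhg, hgh⟩ := hh.exists_measurable_ge_ae_eq
  calc ∫⁻ x, ENNReal.ofReal (a x) * h (S x) ∂ν
      ≤ ∫⁻ x, ENNReal.ofReal (a x) * g (S x) ∂ν :=
        lintegral_mono fun x => by gcongr; exact hhg (S x)
    _ ≤ ∫⁻ x, g x ∂ν := hν.lintegral_ofReal_mul_comp_le ha hg
    _ = ∫⁻ x, h x ∂ν := lintegral_congr_ae hgh

theorem IsSwapStationary.eLpNorm_swapKernel_sub_le {b : Ω → ℝ} (hν : IsSwapStationary ν a S)
    (ha : ∀ x, a x ∈ Set.Icc (0 : ℝ) 1) {δ : ℝ} (hδ : 0 ≤ δ) (hab : ∀ x, |a x - b x| ≤ δ * a x)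
    {f : Ω → ℝ} (hf : AEMeasurable f ν) :
    eLpNorm (swapKernel a S f - swapKernel b S f) 2 ν ≤ ENNReal.ofReal (2 * δ) * eLpNorm f 2 ν := by
  have hf2 : AEMeasurable (fun x => ‖f x‖ₑ ^ 2) ν := hf.enorm.pow_const 2
  have hpt (x : Ω) : ‖(swapKernel a S f - swapKernel b S f) x‖ₑ ^ 2
      ≤ ENNReal.ofReal (2 * δ ^ 2) * (ENNReal.ofReal (a x) * ‖f (S x)‖ₑ ^ 2 + ‖f x‖ₑ ^ 2) := by
    have hdiff : (swapKernel a S f - swapKernel b S f) x = (a x - b x) * (f (S x) - f x) := by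
      simp only [Pi.sub_apply, swapKernel]; ring
    rw [hdiff, enorm_sq_eq_ofReal_sq, enorm_sq_eq_ofReal_sq, enorm_sq_eq_ofReal_sq,
      ← ENNReal.ofReal_mul (ha x).1, ← ENNReal.ofReal_add (mul_nonneg (ha x).1 (sq_nonneg _))
        (sq_nonneg _), ← ENNReal.ofReal_mul (by positivity)]
    exact ENNReal.ofReal_le_ofReal (sq_mul_sub_le_of_abs_sub_le (ha x) (hab x))
  refine eLpNorm_two_le_of_lintegral_le ?_
  calc ∫⁻ x, ‖(swapKernel a S f - swapKernel b S f) x‖ₑ ^ 2 ∂ν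
      ≤ ∫⁻ x, ENNReal.ofReal (2 * δ ^ 2) *
          (ENNReal.ofReal (a x) * ‖f (S x)‖ₑ ^ 2 + ‖f x‖ₑ ^ 2) ∂ν := lintegral_mono hpt
    _ = ENNReal.ofReal (2 * δ ^ 2) *
          (∫⁻ x, ENNReal.ofReal (a x) * ‖f (S x)‖ₑ ^ 2 ∂ν + ∫⁻ x, ‖f x‖ₑ ^ 2 ∂ν) := by
        rw [lintegral_const_mul' _ _ ENNReal.ofReal_ne_top, lintegral_add_right' _ hf2]
    _ ≤ ENNReal.ofReal (2 * δ ^ 2) * (∫⁻ x, ‖f x‖ₑ ^ 2 ∂ν + ∫⁻ x, ‖f x‖ₑ ^ 2 ∂ν) := by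
        gcongr _ * (?_ + _)
        exact hν.lintegral_ofReal_mul_comp_le' ha hf2
    _ = ENNReal.ofReal (2 * δ) ^ 2 * ∫⁻ x, ‖f x‖ₑ ^ 2 ∂ν := by
        rw [← two_mul, ← mul_assoc, ← ENNReal.ofReal_pow (by positivity),
          ← ENNReal.ofReal_ofNat 2, ← ENNReal.ofReal_mul (by positivity)]
        ring_nf

end SwapKernel

theorem swap_kernel_perturbation_general {Ω : Type*} [MeasurableSpace Ω]
    (ν : Measure Ω) [IsProbabilityMeasure ν]
    (S : Ω → Ω)
    (a ahat : Ω → ℝ)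
    (ha : ∀ x, a x ∈ Set.Icc (0 : ℝ) 1)
    (C ε : ℝ) (hC : 0 < C) (hε : 0 < ε)
    (hrev : ∀ f g : Ω → ℝ, Measurable f → Measurable g →
      (∃ Cf, ∀ x, |f x| ≤ Cf) → (∃ Cg, ∀ x, |g x| ≤ Cg) →
      ∫ x, g x * ((1 - a x) * f x + a x * f (S x)) ∂ν
        = ∫ x, f x * ((1 - a x) * g x + a x * g (S x)) ∂ν)
    (hclose : ∀ x, (1 - C * ε) * a x ≤ ahat x ∧ ahat x ≤ (1 + C * ε) * a x)
    (f : Ω → ℝ) (hf : MemLp f 2 ν) :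
    eLpNorm (fun x => ((1 - a x) * f x + a x * f (S x))
        - ((1 - ahat x) * f x + ahat x * f (S x))) 2 ν
      ≤ ENNReal.ofReal (2 * C * ε) * eLpNorm f 2 ν := by
  have hν : IsSwapStationary ν a S := fun h hm hb => by
    simpa [swapKernel] using hrev h (fun _ => 1) hm measurable_const hb ⟨1, fun _ => by simp⟩
  have hab (x : Ω) : |a x - ahat x| ≤ C * ε * a x :=
    abs_sub_le_iff.mpr ⟨by linarith [(hclose x).1], by linarith [(hclose x).2]⟩
  rw [mul_assoc 2]
  exact hν.eLpNorm_swapKernel_sub_le ha (mul_pos hC hε).le hab hf.aemeasurable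

/-- Perturbation bound for swap-type Metropolis kernels: if the acceptance functions
satisfy `(1 − Cε) a ≤ â ≤ (1 + Cε) a`, then `‖(Q − Q̂)f‖_{L²(ν)} ≤ 2Cε ‖f‖_{L²(ν)}`,
where `Qf(x) = (1 − a(x)) f(x) + a(x) f(S(x))` and similarly for `Q̂`. -/
theorem swap_kernel_perturbation {Ω : Type*} [MeasurableSpace Ω]
    (ν : Measure Ω) [IsProbabilityMeasure ν]
    (S : Ω → Ω) (hS : Measurable S)
    (a ahat : Ω → ℝ)
    (ha : ∀ x, a x ∈ Set.Icc (0 : ℝ) 1) (hahat : ∀ x, ahat x ∈ Set.Icc (0 : ℝ) 1)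
    (C ε : ℝ) (hC : 0 < C) (hε : 0 < ε) (hCε : C * ε < 1)
    (hrev : ∀ f g : Ω → ℝ, Measurable f → Measurable g →
      (∃ Cf, ∀ x, |f x| ≤ Cf) → (∃ Cg, ∀ x, |g x| ≤ Cg) →
      ∫ x, g x * ((1 - a x) * f x + a x * f (S x)) ∂ν
        = ∫ x, f x * ((1 - a x) * g x + a x * g (S x)) ∂ν)
    (hclose : ∀ x, (1 - C * ε) * a x ≤ ahat x ∧ ahat x ≤ (1 + C * ε) * a x)
    (f : Ω → ℝ) (hf : MemLp f 2 ν) :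
    eLpNorm (fun x => ((1 - a x) * f x + a x * f (S x))
        - ((1 - ahat x) * f x + ahat x * f (S x))) 2 ν
      ≤ ENNReal.ofReal (2 * C * ε) * eLpNorm f 2 ν :=
  swap_kernel_perturbation_general ν S a ahat ha C ε hC hε hrev hclose f hf
end
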